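/- Let G be a chordal bipartite graph with parts X = {k_1,…,k_p} and Y = {l_1,…,l_q}. Let G' be the graph whose vertex set consists of the vertices of G, a disjoint copy {m_1,…,m_p} ∪ {n_1,…,n_q} of them, and four new vertices k, l, m, n, and whose edges are: all edges of G; an edge m_i n_j whenever k_i l_j is an edge of G; all edges between K_1 = {k, k_1,…,k_p} and K_2 = {m, m_1,…,m_p}; and the pendant edges l–k and n–m. Then G' is chordal bipartite, i.e. G' is bipartite and has no induced cycle of length six or more. -/

import Mathlib

/-- `D` is a dominating set of `G`: every vertex outside `D` has a neighbour in `D`. -/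
def Dominates {V : Type*} (G : SimpleGraph V) (D : Set V) : Prop :=
  ∀ u, u ∉ D → ∃ v ∈ D, G.Adj u v

/-- `S` is a secure dominating set of `G`. -/
def SecureDominates {V : Type*} (G : SimpleGraph V) (S : Set V) : Prop :=
  Dominates G S ∧
    ∀ u, u ∉ S → ∃ v ∈ S, G.Adj u v ∧ Dominates G ((S \ {v}) ∪ {u})

/-- The graph `G'` obtained from a bipartite graph `G` with parts `X` and `Y`.
Vertices: the original vertices (`Sum.inl u`), a disjoint copy of them
(`Sum.inr (Sum.inl u)`), and four new vertices `k = Sum.inr (Sum.inr 0)`,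
`l = Sum.inr (Sum.inr 1)`, `m = Sum.inr (Sum.inr 2)`, `n = Sum.inr (Sum.inr 3)`.
Edges: all edges of `G`; the copies of the edges of `G` (an edge `mᵢ nⱼ`
whenever `kᵢ lⱼ` is an edge of `G`); all edges between `{k} ∪ X` and the copy
`{m} ∪ X`-copy; and the pendant edges `l - k` and `n - m`. -/
def bipartiteBigExt {V : Type*} (G : SimpleGraph V) (X : Set V) :
    SimpleGraph (V ⊕ V ⊕ Fin 4) :=
  SimpleGraph.fromRel (fun a b =>
    (∃ u v, a = Sum.inl u ∧ b = Sum.inl v ∧ G.Adj u v) ∨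
    (∃ u v, a = Sum.inr (Sum.inl u) ∧ b = Sum.inr (Sum.inl v) ∧ G.Adj u v) ∨
    (∃ u v, a = Sum.inl u ∧ u ∈ X ∧ b = Sum.inr (Sum.inl v) ∧ v ∈ X) ∨
    (∃ u, a = Sum.inl u ∧ u ∈ X ∧ b = Sum.inr (Sum.inr 2)) ∨
    (∃ v, a = Sum.inr (Sum.inr 0) ∧ b = Sum.inr (Sum.inl v) ∧ v ∈ X) ∨
    (a = Sum.inr (Sum.inr 0) ∧ b = Sum.inr (Sum.inr 2)) ∨
    (a = Sum.inr (Sum.inr 1) ∧ b = Sum.inr (Sum.inr 0)) ∨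
    (a = Sum.inr (Sum.inr 3) ∧ b = Sum.inr (Sum.inr 2)))

/-! The pendant vertices `l` and `n` lie on no cycle. The set `K₁ ∪ K₂` induces a complete
bipartite graph, every vertex of `Y` has all its neighbours in `K₁` and every vertex of the copy
of `Y` all its neighbours in `K₂`. An induced cycle of length at least six through both `K₁` and
`K₂` cannot visit `Y`: a vertex of `K₂` on the cycle would be adjacent to both cycle-neighbours
of such a vertex, hence be that vertex. Symmetrically it avoids the copy of `Y`, so it lies in
`K₁ ∪ K₂`, where induced cycles have length four. An induced cycle avoiding `K₂` cannot visit
`k` or the copy of `Y`, whose neighbours lie in `K₂ ∪ {l}`, so it is an induced cycle of `G`;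
symmetrically for a cycle avoiding `K₁`. -/

namespace SimpleGraph.Embedding

theorem nonempty_of_forall_mem_range {U V W : Type*}
    {F : SimpleGraph U} {G : SimpleGraph V} {H : SimpleGraph W} (f : F ↪g H) (φ : G ↪g H)
    (h : ∀ x, f x ∈ Set.range φ) : Nonempty (F ↪g G) := by
  choose g hg using h
  refine ⟨⟨⟨g, fun x y hxy => f.injective ?_⟩, ?_⟩⟩
  · rw [← hg x, ← hg y, hxy]
  · intro x y
    rw [← φ.map_rel_iff, ← f.map_rel_iff]
    exact iff_of_eq (congrArg₂ H.Adj (hg x) (hg y))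

open Fin.CommRing

variable {W : Type*} {H : SimpleGraph W} {n : ℕ} (f : cycleGraph (n + 2) ↪g H)

theorem cycleGraph_adj_apply_iff {i j : Fin (n + 2)} :
    H.Adj (f i) (f j) ↔ j = i - 1 ∨ j = i + 1 := by
  rw [f.map_rel_iff, ← mem_neighborSet, cycleGraph_neighborSet]
  rfl

theorem cycleGraph_adj_apply_add_one (i : Fin (n + 2)) : H.Adj (f i) (f (i + 1)) :=
  f.cycleGraph_adj_apply_iff.2 (Or.inr rfl)

theorem cycleGraph_adj_apply_sub_one (i : Fin (n + 2)) : H.Adj (f i) (f (i - 1)) :=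
  f.cycleGraph_adj_apply_iff.2 (Or.inl rfl)

theorem cycleGraph_apply_ne_of_forall_adj_eq (hn : 1 ≤ n) {v u : W}
    (hv : ∀ w, H.Adj v w → w = u) (i : Fin (n + 2)) : f i ≠ v := by
  intro hi
  have hpred := hv _ (hi ▸ f.cycleGraph_adj_apply_sub_one i)
  have hsucc := hv _ (hi ▸ f.cycleGraph_adj_apply_add_one i)
  have h : i - 1 = i + 1 := f.injective (hpred.trans hsucc.symm)
  have h2 : (2 : Fin (n + 2)) = 0 := by linear_combination -h
  simp [Fin.ext_iff, Nat.mod_eq_of_lt (by omega : 2 < n + 2)] at h2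

theorem cycleGraph_eq_of_forall_adj_mem (hn : 3 ≤ n) {A B : Set W}
    (hAB : ∀ a ∈ A, ∀ b ∈ B, H.Adj a b) {t j : Fin (n + 2)}
    (ht : ∀ w, H.Adj (f t) w → w ∈ A) (hj : f j ∈ B) : j = t := by
  have hpred := hAB _ (ht _ (f.cycleGraph_adj_apply_sub_one t)) _ hj
  have hsucc := hAB _ (ht _ (f.cycleGraph_adj_apply_add_one t)) _ hj
  rw [cycleGraph_adj_apply_iff] at hpred hsucc
  have h4 : (4 : Fin (n + 2)) ≠ 0 := by
    simp [Fin.ext_iff, Nat.mod_eq_of_lt (by omega : 4 < n + 2)]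
  rcases hpred with h | h
  · rcases hsucc with h' | h'
    · linear_combination h'
    · exact absurd (by linear_combination h - h') h4
  · linear_combination h

theorem cycleGraph_le_four_of_forall_mem_union {A B : Set W}
    (hAB : ∀ a ∈ A, ∀ b ∈ B, H.Adj a b) (hrange : ∀ i, f i ∈ A ∪ B)
    {i j : Fin (n + 2)} (hi : f i ∈ A) (hj : f j ∈ B) : n + 2 ≤ 4 := by
  have hsub : (Finset.univ : Finset (Fin (n + 2))) ⊆ {j - 1, j + 1, i - 1, i + 1} := by
    intro t _
    rcases hrange t with ht | ht
    · rcases f.cycleGraph_adj_apply_iff.1 (hAB _ ht _ hj).symm with h | h <;> simp [h]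
    · rcases f.cycleGraph_adj_apply_iff.1 (hAB _ hi _ ht) with h | h <;> simp [h]
  calc n + 2 = (Finset.univ : Finset (Fin (n + 2))).card := by simp
    _ ≤ _ := Finset.card_le_card hsub
    _ ≤ 4 := Finset.card_le_four

end SimpleGraph.Embedding

namespace bipartiteBigExt

variable {V : Type*} {G : SimpleGraph V} {X : Set V}

variable (X) in
def K₁ : Set (V ⊕ V ⊕ Fin 4) := insert (.inr (.inr 0)) (Sum.inl '' X)

variable (X) in
def K₂ : Set (V ⊕ V ⊕ Fin 4) := insert (.inr (.inr 2)) ((Sum.inr ∘ Sum.inl) '' X)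

theorem k_mem_K₁ : (.inr (.inr 0) : V ⊕ V ⊕ Fin 4) ∈ K₁ X := Set.mem_insert _ _

theorem inl_mem_K₁ {u : V} (hu : u ∈ X) : (.inl u : V ⊕ V ⊕ Fin 4) ∈ K₁ X :=
  Set.mem_insert_of_mem _ ⟨u, hu, rfl⟩

theorem m_mem_K₂ : (.inr (.inr 2) : V ⊕ V ⊕ Fin 4) ∈ K₂ X := Set.mem_insert _ _

theorem copy_mem_K₂ {u : V} (hu : u ∈ X) : (.inr (.inl u) : V ⊕ V ⊕ Fin 4) ∈ K₂ X :=
  Set.mem_insert_of_mem _ ⟨u, hu, rfl⟩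

theorem adj_of_mem_K₁_of_mem_K₂ : ∀ a ∈ K₁ X, ∀ b ∈ K₂ X, (bipartiteBigExt G X).Adj a b := by
  rintro a (rfl | ⟨u, hu, rfl⟩) b (rfl | ⟨v, hv, rfl⟩) <;>
    simp [bipartiteBigExt, *]

theorem adj_inl_inl {u v : V} :
    (bipartiteBigExt G X).Adj (.inl u) (.inl v) ↔ G.Adj u v := by
  simpa [bipartiteBigExt, G.adj_comm] using fun h => h.ne

theorem adj_copy_copy {u v : V} :
    (bipartiteBigExt G X).Adj (.inr (.inl u)) (.inr (.inl v)) ↔ G.Adj u v := by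
  simpa [bipartiteBigExt, G.adj_comm] using fun h => h.ne

variable (G X) in
def inlEmbedding : G ↪g bipartiteBigExt G X where
  toEmbedding := Function.Embedding.inl
  map_rel_iff' := adj_inl_inl

variable (G X) in
def copyEmbedding : G ↪g bipartiteBigExt G X where
  toEmbedding := Function.Embedding.inl.trans Function.Embedding.inr
  map_rel_iff' := adj_copy_copy

theorem eq_k_of_adj_l {w : V ⊕ V ⊕ Fin 4}
    (h : (bipartiteBigExt G X).Adj (.inr (.inr 1)) w) : w = .inr (.inr 0) := by
  rcases w with u | u | i <;> simp [bipartiteBigExt] at h ⊢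
  fin_cases i <;> simp_all

theorem eq_m_of_adj_n {w : V ⊕ V ⊕ Fin 4}
    (h : (bipartiteBigExt G X).Adj (.inr (.inr 3)) w) : w = .inr (.inr 2) := by
  rcases w with u | u | i <;> simp [bipartiteBigExt] at h ⊢
  fin_cases i <;> simp_all

theorem mem_K₂_or_eq_l_of_adj_k {w : V ⊕ V ⊕ Fin 4}
    (h : (bipartiteBigExt G X).Adj (.inr (.inr 0)) w) : w ∈ K₂ X ∨ w = .inr (.inr 1) := by
  rcases w with u | u | i <;> simp [bipartiteBigExt, K₂] at h ⊢
  · exact h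
  · fin_cases i <;> simp_all

theorem mem_K₁_or_eq_n_of_adj_m {w : V ⊕ V ⊕ Fin 4}
    (h : (bipartiteBigExt G X).Adj (.inr (.inr 2)) w) : w ∈ K₁ X ∨ w = .inr (.inr 3) := by
  rcases w with u | u | i <;> simp [bipartiteBigExt, K₁] at h ⊢
  · exact h
  · fin_cases i <;> simp_all

theorem mem_K₁_of_adj_inl (hG : ∀ u v, G.Adj u v → u ∉ X → v ∈ X) {u : V} (hu : u ∉ X)
    {w : V ⊕ V ⊕ Fin 4} (h : (bipartiteBigExt G X).Adj (.inl u) w) : w ∈ K₁ X := by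
  rcases w with v | v | i
  · exact inl_mem_K₁ (hG u v (adj_inl_inl.1 h) hu)
  all_goals simp [bipartiteBigExt, hu] at h

theorem mem_K₂_of_adj_copy (hG : ∀ u v, G.Adj u v → u ∉ X → v ∈ X) {u : V} (hu : u ∉ X)
    {w : V ⊕ V ⊕ Fin 4} (h : (bipartiteBigExt G X).Adj (.inr (.inl u)) w) : w ∈ K₂ X := by
  rcases w with v | v | i
  · simp [bipartiteBigExt, hu] at h
  · exact copy_mem_K₂ (hG u v (adj_copy_copy.1 h) hu)
  · simp [bipartiteBigExt, hu] at h

variable {n : ℕ} (f : SimpleGraph.cycleGraph (n + 2) ↪g bipartiteBigExt G X)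

theorem cycleGraph_apply_mem_K₁_union_K₂ (hG : ∀ u v, G.Adj u v → u ∉ X → v ∈ X) (hn : 3 ≤ n)
    {i j : Fin (n + 2)} (hi : f i ∈ K₁ X) (hj : f j ∈ K₂ X) (t : Fin (n + 2)) :
    f t ∈ K₁ X ∪ K₂ X := by
  rcases ht : f t with u | u | c
  · by_cases hu : u ∈ X
    · exact Or.inl (inl_mem_K₁ hu)
    have hjt := f.cycleGraph_eq_of_forall_adj_mem hn adj_of_mem_K₁_of_mem_K₂
      (fun _ h => mem_K₁_of_adj_inl hG hu (ht ▸ h)) hj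
    rw [hjt, ht] at hj
    simp [K₂] at hj
  · by_cases hu : u ∈ X
    · exact Or.inr (copy_mem_K₂ hu)
    have hit := f.cycleGraph_eq_of_forall_adj_mem hn
      (fun a ha b hb => (adj_of_mem_K₁_of_mem_K₂ b hb a ha).symm)
      (fun _ h => mem_K₂_of_adj_copy hG hu (ht ▸ h)) hi
    rw [hit, ht] at hi
    simp [K₁] at hi
  · fin_cases c
    · exact Or.inl k_mem_K₁
    · exact absurd ht (f.cycleGraph_apply_ne_of_forall_adj_eq (by omega) (fun _ => eq_k_of_adj_l) t)
    · exact Or.inr m_mem_K₂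
    · exact absurd ht (f.cycleGraph_apply_ne_of_forall_adj_eq (by omega) (fun _ => eq_m_of_adj_n) t)

theorem cycleGraph_apply_mem_range_inl (hG : ∀ u v, G.Adj u v → u ∉ X → v ∈ X) (hn : 1 ≤ n)
    (hK₂ : ∀ i, f i ∉ K₂ X) (i : Fin (n + 2)) : f i ∈ Set.range (inlEmbedding G X) := by
  have hl := f.cycleGraph_apply_ne_of_forall_adj_eq hn (fun _ => eq_k_of_adj_l)
  have hsucc := f.cycleGraph_adj_apply_add_one i
  rcases ht : f i with u | u | c
  · exact ⟨u, rfl⟩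
  · exfalso
    rw [ht] at hsucc
    by_cases hu : u ∈ X
    · exact hK₂ i (ht ▸ copy_mem_K₂ hu)
    · exact hK₂ _ (mem_K₂_of_adj_copy hG hu hsucc)
  · exfalso
    rw [ht] at hsucc
    fin_cases c
    · exact (mem_K₂_or_eq_l_of_adj_k hsucc).elim (hK₂ _) (hl _)
    · exact hl i ht
    · exact hK₂ i (ht ▸ m_mem_K₂)
    · exact hK₂ (i + 1) (eq_m_of_adj_n hsucc ▸ m_mem_K₂)

theorem cycleGraph_apply_mem_range_copy (hG : ∀ u v, G.Adj u v → u ∉ X → v ∈ X) (hn : 1 ≤ n)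
    (hK₁ : ∀ i, f i ∉ K₁ X) (i : Fin (n + 2)) : f i ∈ Set.range (copyEmbedding G X) := by
  have hn' := f.cycleGraph_apply_ne_of_forall_adj_eq hn (fun _ => eq_m_of_adj_n)
  have hsucc := f.cycleGraph_adj_apply_add_one i
  rcases ht : f i with u | u | c
  · exfalso
    rw [ht] at hsucc
    by_cases hu : u ∈ X
    · exact hK₁ i (ht ▸ inl_mem_K₁ hu)
    · exact hK₁ _ (mem_K₁_of_adj_inl hG hu hsucc)
  · exact ⟨u, rfl⟩
  · exfalso
    rw [ht] at hsucc
    fin_cases c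
    · exact hK₁ i (ht ▸ k_mem_K₁)
    · exact hK₁ (i + 1) (eq_k_of_adj_l hsucc ▸ k_mem_K₁)
    · exact (mem_K₁_or_eq_n_of_adj_m hsucc).elim (hK₁ _) (hn' _)
    · exact hn' i ht

theorem isEmpty_cycleGraph_embedding (hG : ∀ u v, G.Adj u v → u ∉ X → v ∈ X)
    (hchordal : IsEmpty (SimpleGraph.cycleGraph (n + 2) ↪g G)) (hn : 3 ≤ n) :
    IsEmpty (SimpleGraph.cycleGraph (n + 2) ↪g bipartiteBigExt G X) := by
  refine ⟨fun f => ?_⟩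
  by_cases hK₂ : ∃ j, f j ∈ K₂ X
  · by_cases hK₁ : ∃ i, f i ∈ K₁ X
    · obtain ⟨i, hi⟩ := hK₁
      obtain ⟨j, hj⟩ := hK₂
      have := f.cycleGraph_le_four_of_forall_mem_union adj_of_mem_K₁_of_mem_K₂
        (cycleGraph_apply_mem_K₁_union_K₂ f hG hn hi hj) hi hj
      omega
    push Not at hK₁
    exact hchordal.false (f.nonempty_of_forall_mem_range _
      (cycleGraph_apply_mem_range_copy f hG (by omega) hK₁)).some
  push Not at hK₂
  exact hchordal.false (f.nonempty_of_forall_mem_range _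
    (cycleGraph_apply_mem_range_inl f hG (by omega) hK₂)).some

variable (X) in
def side : V ⊕ V ⊕ Fin 4 → Prop
  | .inl u => u ∈ X
  | .inr (.inl u) => u ∉ X
  | .inr (.inr i) => i = 0 ∨ i = 3

theorem side_iff_not_side_of_adj (hX : ∀ a ∈ X, ∀ b ∈ X, ¬ G.Adj a b)
    (hG : ∀ u v, G.Adj u v → u ∉ X → v ∈ X) {a b : V ⊕ V ⊕ Fin 4}
    (h : (bipartiteBigExt G X).Adj a b) : side X a ↔ ¬ side X b := by
  have hG' : ∀ u v, G.Adj u v → (u ∈ X ↔ v ∉ X) := fun u v huv =>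
    ⟨fun hu hv => hX u hu v hv huv, not_imp_comm.1 (hG u v huv)⟩
  rcases a with u | u | i <;> rcases b with v | v | j
  case inl.inl => exact hG' u v (adj_inl_inl.1 h)
  case inr.inl.inr.inl => exact not_congr (hG' u v (adj_copy_copy.1 h))
  all_goals simp [bipartiteBigExt, side] at h ⊢; grind

end bipartiteBigExt

open bipartiteBigExt in
theorem bipartiteBigExt_chordalBipartite_general {V : Type*}
    (G : SimpleGraph V) (X Y : Set V)
    (hpart : X ∪ Y = Set.univ)
    (hX : ∀ a ∈ X, ∀ b ∈ X, ¬ G.Adj a b)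
    (hY : ∀ a ∈ Y, ∀ b ∈ Y, ¬ G.Adj a b)
    -- `G` is chordal bipartite: no induced cycle of length six or more
    (hchordal : ∀ n : ℕ, 6 ≤ n → IsEmpty (SimpleGraph.cycleGraph n ↪g G)) :
    -- `G'` is bipartite, and has no induced cycle of length six or more
    (∃ A B : Set (V ⊕ V ⊕ Fin 4), A ∪ B = Set.univ ∧ Disjoint A B ∧
      (∀ a ∈ A, ∀ b ∈ A, ¬ (bipartiteBigExt G X).Adj a b) ∧
      (∀ a ∈ B, ∀ b ∈ B, ¬ (bipartiteBigExt G X).Adj a b)) ∧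
    (∀ n : ℕ, 6 ≤ n → IsEmpty (SimpleGraph.cycleGraph n ↪g (bipartiteBigExt G X))) := by
  have hY' : ∀ u, u ∉ X → u ∈ Y := fun u hu =>
    ((Set.mem_union _ _ _).1 (hpart ▸ Set.mem_univ u)).resolve_left hu
  have hG : ∀ u v, G.Adj u v → u ∉ X → v ∈ X := fun u v huv hu => by
    by_contra hv
    exact hY u (hY' u hu) v (hY' v hv) huv
  refine ⟨⟨{w | side X w}, {w | ¬ side X w}, Set.union_compl_self _,
    disjoint_compl_right, fun a ha b hb hab => (side_iff_not_side_of_adj hX hG hab).1 ha hb,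
    fun a ha b hb hab => ha ((side_iff_not_side_of_adj hX hG hab).2 hb)⟩, fun n hn => ?_⟩
  obtain ⟨n, rfl⟩ : ∃ m, n = m + 2 := ⟨n - 2, by omega⟩
  exact isEmpty_cycleGraph_embedding hG (hchordal _ hn) (by omega)

theorem bipartiteBigExt_chordalBipartite {V : Type*} [Fintype V]
    (G : SimpleGraph V) (X Y : Set V)
    (hpart : X ∪ Y = Set.univ) (hdisj : Disjoint X Y)
    (hX : ∀ a ∈ X, ∀ b ∈ X, ¬ G.Adj a b)
    (hY : ∀ a ∈ Y, ∀ b ∈ Y, ¬ G.Adj a b)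
    -- `G` is chordal bipartite: no induced cycle of length six or more
    (hchordal : ∀ n : ℕ, 6 ≤ n → IsEmpty (SimpleGraph.cycleGraph n ↪g G)) :
    -- `G'` is bipartite, and has no induced cycle of length six or more
    (∃ A B : Set (V ⊕ V ⊕ Fin 4), A ∪ B = Set.univ ∧ Disjoint A B ∧
      (∀ a ∈ A, ∀ b ∈ A, ¬ (bipartiteBigExt G X).Adj a b) ∧
      (∀ a ∈ B, ∀ b ∈ B, ¬ (bipartiteBigExt G X).Adj a b)) ∧
    (∀ n : ℕ, 6 ≤ n → IsEmpty (SimpleGraph.cycleGraph n ↪g (bipartiteBigExt G X))) :=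
  bipartiteBigExt_chordalBipartite_general G X Y hpart hX hY hchordal
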